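/- arXiv:2104.04416 — 3 statements merged into one kernel-verified Lean document; each statement's English description precedes it below -/
import Mathlib

section
/- The polynomial score function ψ_P(x) = x/(1 + (x/β)^{1−1/p}) (for fixed β > 0 and integer p ≥ 1) satisfies ψ_P'(x) ≥ (1/4)·1{x ≤ β} for all x ≥ 0. -/
/-!
Write `α = 1 - 1/p ∈ [0, 1]` and `u = (x/β)^α`. Away from `0` the quotient rule gives
`ψ_P'(x) = (1 + (1 - α) u) / (1 + u)²`, and this formula persists at `x = 0`, where `ψ_P` is
`x` times a function continuous at `0`. The numerator is at least `1`, and for `x ≤ β` we have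
`u ≤ 1`, so the denominator is at most `4`.
-/

open Real Filter Topology

noncomputable def polyScore (β α : ℝ) (y : ℝ) : ℝ := y / (1 + (y / β) ^ α)

theorem hasDerivAt_zero_id_mul {g : ℝ → ℝ} (hg : ContinuousAt g 0) :
    HasDerivAt (fun y => y * g y) (g 0) 0 := by
  rw [hasDerivAt_iff_tendsto_slope]
  refine (hg.tendsto.mono_left nhdsWithin_le_nhds).congr' ?_
  filter_upwards [self_mem_nhdsWithin] with y (hy : y ≠ 0)
  rw [slope_def_field]
  field_simp
  simp

section polyScore

variable {β α x : ℝ}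

theorem hasDerivAt_polyScore_of_pos (hβ : 0 < β) (hx : 0 < x) :
    HasDerivAt (polyScore β α) ((1 + (1 - α) * (x / β) ^ α) / (1 + (x / β) ^ α) ^ 2) x := by
  have hxβ : 0 < x / β := div_pos hx hβ
  have hpow : HasDerivAt (fun y => (y / β) ^ α) (α * (x / β) ^ (α - 1) * (1 / β)) x := by
    simpa [Function.comp_def] using
      (hasDerivAt_rpow_const (p := α) (Or.inl hxβ.ne')).comp x ((hasDerivAt_id x).div_const β)
  refine ((hasDerivAt_id' x).div (hpow.const_add 1) (by positivity)).congr_deriv ?_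
  rw [rpow_sub hxβ, rpow_one]
  field_simp
  ring

theorem hasDerivAt_polyScore_zero (hα : 0 ≤ α) :
    HasDerivAt (polyScore β α) ((1 + (1 - α) * (0 / β) ^ α) / (1 + (0 / β) ^ α) ^ 2) 0 := by
  rcases hα.eq_or_lt with rfl | hα
  · have hhalf : polyScore β 0 = fun y => y / 2 := by
      funext y
      norm_num [polyScore]
    rw [hhalf]
    exact ((hasDerivAt_id' 0).div_const 2).congr_deriv (by norm_num)
  · have hcont : ContinuousAt (fun y => (1 + (y / β) ^ α)⁻¹) 0 := by
      refine ((continuousAt_rpow_const _ _ (Or.inr hα.le)).comp ?_).const_add 1 |>.inv₀ ?_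
      · exact (continuous_id.div_const β).continuousAt
      · simp [zero_rpow hα.ne']
    convert hasDerivAt_zero_id_mul hcont using 1
    · funext y
      exact div_eq_mul_inv _ _
    · simp [zero_rpow hα.ne']

theorem hasDerivAt_polyScore (hβ : 0 < β) (hα : 0 ≤ α) (hx : 0 ≤ x) :
    HasDerivAt (polyScore β α) ((1 + (1 - α) * (x / β) ^ α) / (1 + (x / β) ^ α) ^ 2) x := by
  rcases hx.eq_or_lt with rfl | hx
  · exact hasDerivAt_polyScore_zero hα
  · exact hasDerivAt_polyScore_of_pos hβ hx

end polyScore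

theorem quarter_le_one_add_mul_div_sq {α u : ℝ} (hα : α ≤ 1) (hu₀ : 0 ≤ u) (hu₁ : u ≤ 1) :
    1 / 4 ≤ (1 + (1 - α) * u) / (1 + u) ^ 2 := by
  rw [div_le_div_iff₀ (by norm_num) (by positivity)]
  nlinarith [mul_nonneg (sub_nonneg.2 hα) hu₀]

theorem one_add_mul_div_sq_nonneg {α u : ℝ} (hα : α ≤ 1) (hu : 0 ≤ u) :
    0 ≤ (1 + (1 - α) * u) / (1 + u) ^ 2 := by
  have := mul_nonneg (sub_nonneg.2 hα) hu
  positivity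

theorem poly_deriv_ge_general (β : ℝ) (hβ : 0 < β) (p : ℕ) :
    ∀ x ≥ (0:ℝ),
      (if x ≤ β then (1:ℝ)/4 else 0) ≤
        deriv (fun y : ℝ => y / (1 + (y / β) ^ ((1:ℝ) - 1 / (p:ℝ)))) x := by
  intro x hx
  have hα₀ : (0 : ℝ) ≤ 1 - 1 / p := by
    rw [one_div, sub_nonneg]
    exact Nat.cast_inv_le_one p
  have hα₁ : (1 : ℝ) - 1 / p ≤ 1 := by
    rw [sub_le_self_iff]
    positivity
  have hu : 0 ≤ (x / β) ^ ((1 : ℝ) - 1 / p) := rpow_nonneg (div_nonneg hx hβ.le) _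
  change _ ≤ deriv (polyScore β (1 - 1 / p)) x
  rw [(hasDerivAt_polyScore hβ hα₀ hx).deriv]
  split_ifs with hxβ
  · exact quarter_le_one_add_mul_div_sq hα₁ hu
      (rpow_le_one (div_nonneg hx hβ.le) ((div_le_one hβ).2 hxβ) hα₀)
  · exact one_add_mul_div_sq_nonneg hα₁ hu

/-- The polynomial score ψ_P(x) = x/(1 + (x/β)^{1-1/p}) satisfies
ψ_P'(x) ≥ (1/4)·1{x ≤ β} for all x ≥ 0. -/
theorem poly_deriv_ge (β : ℝ) (hβ : 0 < β) (p : ℕ) (hp : 1 ≤ p) :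
    ∀ x ≥ (0:ℝ),
      (if x ≤ β then (1:ℝ)/4 else 0) ≤
        deriv (fun y : ℝ => y / (1 + (y / β) ^ ((1:ℝ) - 1 / (p:ℝ)))) x :=
  poly_deriv_ge_general β hβ p
end

section
/- Let Z be a nonnegative real random variable with E[Z] < ∞, and let q ≥ 1 be an integer. Then E[(log(1+Z))^q] ≤ q!·(max(e, log(1+E[Z])))^q. -/
/-!
The tangent line to `x ↦ log (1 + x) ^ q` at `x = exp c - 1` lies above it on `[0, ∞)` as soon
as `c ≥ q`: in the variables `t = log (1 + x)` and `w = t / c` this is `w ^ q ≤ exp (q (w - 1))`,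
a power of `w ≤ exp (w - 1)`, followed by convexity of `a ↦ exp (a (w - 1))` on `[0, c]`.
Integrating the tangent line gives `E[log (1 + Z) ^ q] ≤ c ^ q` as soon as also
`1 + E[Z] ≤ exp c`. Take `c = max q (log (1 + E[Z]))` and use `q ^ q ≤ q! e ^ q`.
-/

open MeasureTheory Real
open scoped Nat

lemma mul_exp_mul_sub_one_le {a b : ℝ} (ha : 0 ≤ a) (hab : a ≤ b) (s : ℝ) :
    b * (exp (a * s) - 1) ≤ a * (exp (b * s) - 1) := by
  rcases (ha.trans hab).eq_or_lt with rfl | hb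
  · simp [le_antisymm hab ha]
  have hconv := convexOn_exp.2 (Set.mem_univ (b * s)) (Set.mem_univ 0) (div_nonneg ha hb.le)
    (sub_nonneg.2 ((div_le_one hb).2 hab)) (add_sub_cancel _ _)
  have hab_s : a / b * (b * s) = a * s := by field_simp
  simp only [smul_eq_mul, mul_zero, add_zero, exp_zero, mul_one, hab_s] at hconv
  calc b * (exp (a * s) - 1) ≤ b * (a / b * exp (b * s) + (1 - a / b) - 1) := by gcongr
    _ = a * (exp (b * s) - 1) := by field_simp; ring

lemma pow_le_exp_mul_sub_one (n : ℕ) {w : ℝ} (hw : 0 ≤ w) : w ^ n ≤ exp (n * (w - 1)) := by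
  rw [exp_nat_mul]
  exact pow_le_pow_left₀ hw (by linarith [add_one_le_exp (w - 1)]) n

lemma pow_le_pow_add_mul_exp_sub_one (q : ℕ) {c t : ℝ} (hqc : (q : ℝ) ≤ c) (ht : 0 ≤ t) :
    t ^ q ≤ c ^ q + q * c ^ (q - 1) * (exp (t - c) - 1) := by
  rcases q with _ | q
  · simp
  have hc : 0 < c := lt_of_lt_of_le (by positivity) hqc
  obtain ⟨w, hw, rfl⟩ : ∃ w, 0 ≤ w ∧ t = c * w :=
    ⟨t / c, div_nonneg ht hc.le, by field_simp⟩
  have hpow := pow_le_exp_mul_sub_one (q + 1) hw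
  have hconv := mul_exp_mul_sub_one_le (Nat.cast_nonneg (q + 1)) hqc (w - 1)
  rw [show c * w - c = c * (w - 1) by ring, mul_pow, Nat.add_sub_cancel, pow_succ]
  calc c ^ q * c * w ^ (q + 1)
      ≤ c ^ q * c * exp ((q + 1 : ℕ) * (w - 1)) := by gcongr
    _ = c ^ q * c + c ^ q * (c * (exp ((q + 1 : ℕ) * (w - 1)) - 1)) := by ring
    _ ≤ c ^ q * c + c ^ q * ((q + 1 : ℕ) * (exp (c * (w - 1)) - 1)) := by gcongr
    _ = c ^ q * c + (q + 1 : ℕ) * c ^ q * (exp (c * (w - 1)) - 1) := by ring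

theorem integral_log_one_add_pow_le {Ω : Type*} [MeasurableSpace Ω] {μ : Measure Ω}
    [IsProbabilityMeasure μ] {Z : Ω → ℝ} (hZ : 0 ≤ᵐ[μ] Z) (hint : Integrable Z μ) {q : ℕ}
    {c : ℝ} (hqc : (q : ℝ) ≤ c) (hc : log (1 + ∫ ω, Z ω ∂μ) ≤ c) :
    ∫ ω, log (1 + Z ω) ^ q ∂μ ≤ c ^ q := by
  set k := (q : ℝ) * c ^ (q - 1)
  have hk : 0 ≤ k := mul_nonneg q.cast_nonneg (pow_nonneg (q.cast_nonneg.trans hqc) _)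
  have hbound : ∀ x : ℝ, 0 ≤ x → log (1 + x) ^ q ≤ c ^ q + k * ((1 + x) / exp c - 1) := by
    intro x hx
    have h := pow_le_pow_add_mul_exp_sub_one q hqc (log_nonneg (by linarith : (1 : ℝ) ≤ 1 + x))
    rwa [exp_sub, exp_log (by linarith)] at h
  have hmean : 1 + ∫ ω, Z ω ∂μ ≤ exp c :=
    (log_le_iff_le_exp (by linarith [integral_nonneg_of_ae hZ])).1 hc
  have hone_add : Integrable (fun ω => 1 + Z ω) μ := (integrable_const 1).add hint
  have hshift : Integrable (fun ω => (1 + Z ω) / exp c - 1) μ :=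
    (hone_add.div_const _).sub (integrable_const 1)
  calc ∫ ω, log (1 + Z ω) ^ q ∂μ
      ≤ ∫ ω, (c ^ q + k * ((1 + Z ω) / exp c - 1)) ∂μ :=
        integral_mono_of_nonneg
          (hZ.mono fun ω hω => pow_nonneg (log_nonneg (by simpa using hω)) _)
          ((integrable_const _).add (hshift.const_mul k)) (hZ.mono fun ω hω => hbound _ hω)
    _ = c ^ q + k * ((1 + ∫ ω, Z ω ∂μ) / exp c - 1) := by
        rw [integral_add (integrable_const _) (hshift.const_mul k), integral_const_mul,
          integral_sub (hone_add.div_const _) (integrable_const 1),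
          integral_div, integral_add (integrable_const 1) hint]
        simp
    _ ≤ c ^ q :=
        add_le_of_nonpos_right (mul_nonpos_of_nonneg_of_nonpos hk
          (sub_nonpos.2 ((div_le_one (exp_pos c)).2 hmean)))

lemma max_pow_le_factorial_mul_max_exp_one_pow (q : ℕ) {l : ℝ} (hl : 0 ≤ l) :
    max (q : ℝ) l ^ q ≤ q ! * max (exp 1) l ^ q := by
  rcases le_total (q : ℝ) l with h | h
  · rw [max_eq_right h]
    calc l ^ q ≤ max (exp 1) l ^ q := by gcongr; exact le_max_right _ _
      _ ≤ q ! * max (exp 1) l ^ q :=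
        le_mul_of_one_le_left (by positivity) (Nat.one_le_cast.2 q.factorial_pos)
  · rw [max_eq_left h]
    calc (q : ℝ) ^ q ≤ q ! * exp q := by
          have := pow_div_factorial_le_exp (q : ℝ) q.cast_nonneg q
          rwa [div_le_iff₀' (by positivity)] at this
      _ = q ! * exp 1 ^ q := by rw [← exp_nat_mul, mul_one]
      _ ≤ q ! * max (exp 1) l ^ q := by gcongr; exact le_max_left _ _

theorem log_moment_bound_general {Ω : Type*} [MeasurableSpace Ω] (μ : Measure Ω)
    [IsProbabilityMeasure μ] (Z : Ω → ℝ)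
    (hZnonneg : ∀ ω, 0 ≤ Z ω) (hint : Integrable Z μ) (q : ℕ) :
    (∫ ω, (Real.log (1 + Z ω)) ^ q ∂μ) ≤
      (q.factorial : ℝ) * (max (Real.exp 1) (Real.log (1 + ∫ ω, Z ω ∂μ))) ^ q := by
  have hZ : 0 ≤ᵐ[μ] Z := ae_of_all _ hZnonneg
  have hl : 0 ≤ log (1 + ∫ ω, Z ω ∂μ) := log_nonneg (by linarith [integral_nonneg_of_ae hZ])
  calc ∫ ω, log (1 + Z ω) ^ q ∂μ ≤ max (q : ℝ) (log (1 + ∫ ω, Z ω ∂μ)) ^ q :=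
        integral_log_one_add_pow_le hZ hint (le_max_left _ _) (le_max_right _ _)
    _ ≤ q ! * max (exp 1) (log (1 + ∫ ω, Z ω ∂μ)) ^ q :=
        max_pow_le_factorial_mul_max_exp_one_pow q hl

/-- For a nonnegative integrable random variable Z and integer q ≥ 1,
E[(log(1+Z))^q] ≤ q!·(max(e, log(1+E[Z])))^q. -/
theorem log_moment_bound {Ω : Type*} [MeasurableSpace Ω] (μ : Measure Ω)
    [IsProbabilityMeasure μ] (Z : Ω → ℝ) (hZmeas : Measurable Z)
    (hZnonneg : ∀ ω, 0 ≤ Z ω) (hint : Integrable Z μ) (q : ℕ) (hq : 1 ≤ q) :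
    (∫ ω, (Real.log (1 + Z ω)) ^ q ∂μ) ≤
      (q.factorial : ℝ) * (max (Real.exp 1) (Real.log (1 + ∫ ω, Z ω ∂μ))) ^ q :=
  log_moment_bound_general μ Z hZnonneg hint q
end

section
/- Let ψ: ℝ₊ → ℝ₊ be differentiable, concave, with ψ(0) = 0 and 0 ≤ ψ' ≤ 1, and extend F(x) = (x/‖x‖)ψ(‖x‖) to a Hilbert space H (with F(0)=0). Then for any θ and any unit vector u, the quadratic form of the Jacobian of Z(θ) = E[F(X − θ)] satisfies uᵀ Jac(Z)(θ) u ≤ −E[ψ'(‖X − θ‖)]. -/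
/-!
Write `F x = (ψ ‖x‖ / ‖x‖) • x`. Since `ψ(s)/s ≥ ψ'(s)` and `ψ'` is antitone, Cauchy–Schwarz
reduces the monotonicity of `F` to the real line, where concavity gives
`⟪F a - F b, a - b⟫ ≥ ψ'(max ‖a‖ ‖b‖) ‖a - b‖²`. Taking `a = X - θ`, `b = a - t u` and
integrating, the difference quotient of `t ↦ ⟪u, Z (θ + t u)⟫` at `0⁺` is at most
`-E[ψ'(‖X - θ‖ + t)]`. As `t → 0⁺` this tends to `-E[ψ'(‖X - θ‖)]` by dominated convergence,
because the derivative of a differentiable concave function is right-continuous.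
-/

open scoped Classical
open MeasureTheory
open Filter Set Topology
open scoped RealInnerProductSpace

theorem ConcaveOn.mul_deriv_le {f : ℝ → ℝ} (hf : ConcaveOn ℝ (Ici 0) f) (hd : Differentiable ℝ f)
    (h0 : f 0 = 0) {s : ℝ} (hs : 0 ≤ s) : s * deriv f s ≤ f s := by
  rcases hs.eq_or_lt with rfl | hs
  · simp [h0]
  · have h := hf.deriv_le_slope self_mem_Ici hs.le hs (hd s)
    rwa [slope_def_field, h0, sub_zero, sub_zero, le_div_iff₀ hs, mul_comm] at h

theorem ConcaveOn.mul_sq_sub_le {f : ℝ → ℝ} {S : Set ℝ} (hf : ConcaveOn ℝ S f)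
    (hd : Differentiable ℝ f) {a b m : ℝ} (ha : a ∈ S) (hb : b ∈ S) (hma : m ≤ deriv f a)
    (hmb : m ≤ deriv f b) : m * (a - b) ^ 2 ≤ (f a - f b) * (a - b) := by
  wlog hba : b < a generalizing a b
  · rcases (not_lt.1 hba).eq_or_lt with rfl | hab
    · simp
    · nlinarith [this hb ha hmb hma hab]
  have h := hf.deriv_le_slope hb ha hba (hd a)
  rw [slope_def_field, le_div_iff₀ (sub_pos.2 hba)] at h
  nlinarith [mul_le_mul_of_nonneg_right hma (sq_nonneg (a - b)),
    mul_le_mul_of_nonneg_right h (sub_pos.2 hba).le]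

theorem ConcaveOn.tendsto_deriv_add_nhdsGT {f : ℝ → ℝ} {x : ℝ} (hf : ConcaveOn ℝ (Ici x) f)
    (hd : Differentiable ℝ f) :
    Tendsto (fun t => deriv f (x + t)) (𝓝[>] 0) (𝓝 (deriv f x)) := by
  have hslope : Tendsto (fun t => t⁻¹ * (f (x + t) - f x)) (𝓝[>] 0) (𝓝 (deriv f x)) :=
    (hd x).hasDerivAt.tendsto_slope_zero_right
  have hdouble : Tendsto (fun t : ℝ => 2 * t) (𝓝[>] 0) (𝓝[>] 0) :=
    tendsto_iff_comap.2 (comap_mulLeft_nhdsGT_zero two_pos).ge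
  -- `f'(x + t)` lies between `f'(x)` and the slope of `f` on `[x + t, x + 2t]`,
  -- which is `2 · slope[x, x + 2t] - slope[x, x + t]`.
  have hlower : Tendsto (fun t => 2 * ((2 * t)⁻¹ * (f (x + 2 * t) - f x))
      - t⁻¹ * (f (x + t) - f x)) (𝓝[>] 0) (𝓝 (deriv f x)) := by
    simpa [two_mul] using ((hslope.comp hdouble).const_mul 2).sub hslope
  refine tendsto_of_tendsto_of_tendsto_of_le_of_le' hlower tendsto_const_nhds ?_ ?_
  · filter_upwards [self_mem_nhdsWithin] with t (ht : 0 < t)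
    have h := hf.slope_le_deriv (x := x + t) (y := x + 2 * t) (by simp [mem_Ici, ht.le])
      (by simp [mem_Ici, ht.le]) (by linarith) (hd _)
    refine le_of_eq_of_le ?_ h
    rw [slope_def_field, show x + 2 * t - (x + t) = t by ring]
    field_simp
    ring
  · filter_upwards [self_mem_nhdsWithin] with t (ht : 0 < t)
    exact hf.antitoneOn_deriv (fun y _ => hd y) self_mem_Ici (by simp [mem_Ici, ht.le])
      (by linarith)

section Radial

variable {H : Type*} [NormedAddCommGroup H] [InnerProductSpace ℝ H]

theorem HasFDerivAt.tendsto_inner_slope_nhdsGT {Z : H → H} {D : H →L[ℝ] H} {θ : H}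
    (hD : HasFDerivAt Z D θ) (u : H) :
    Tendsto (fun t : ℝ => t⁻¹ * (⟪u, Z (θ + t • u)⟫ - ⟪u, Z θ⟫)) (𝓝[>] 0) (𝓝 ⟪u, D u⟫) := by
  have hline : HasDerivAt (fun t : ℝ => θ + t • u) u 0 := by
    simpa using ((hasDerivAt_id (0 : ℝ)).smul_const u).const_add θ
  have hcomp := (innerSL ℝ u).hasFDerivAt.comp_hasDerivAt 0
    (HasFDerivAt.comp_hasDerivAt 0 (by simpa using hD) hline)
  simpa using hcomp.tendsto_slope_zero_right

/-- At `x = 0` the coefficient is the junk value `ψ 0 / 0 = 0`, so no case split is needed. -/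
noncomputable def radialMap (ψ : ℝ → ℝ) (x : H) : H := (ψ ‖x‖ / ‖x‖) • x

theorem radialMap_eq_ite (ψ : ℝ → ℝ) (x : H) :
    radialMap ψ x = if x = 0 then 0 else (ψ ‖x‖ / ‖x‖) • x := by
  split_ifs with hx <;> simp [radialMap, hx]

theorem norm_radialMap_le (ψ : ℝ → ℝ) (x : H) : ‖radialMap ψ x‖ ≤ |ψ ‖x‖| := by
  rcases eq_or_ne x 0 with rfl | hx
  · simp [radialMap]
  · rw [radialMap, norm_smul, norm_div, norm_norm, Real.norm_eq_abs,
      div_mul_cancel₀ _ (norm_ne_zero_iff.2 hx)]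

theorem ConcaveOn.exists_radialMap_eq_smul {ψ : ℝ → ℝ} (hf : ConcaveOn ℝ (Ici 0) ψ)
    (hd : Differentiable ℝ ψ) (h0 : ψ 0 = 0) (x : H) :
    ∃ p, deriv ψ ‖x‖ ≤ p ∧ p * ‖x‖ = ψ ‖x‖ ∧ radialMap ψ x = p • x := by
  rcases eq_or_ne x 0 with rfl | hx
  · exact ⟨deriv ψ 0, by simp, by simp [h0], by simp [radialMap]⟩
  · have hx' := norm_pos_iff.2 hx
    refine ⟨ψ ‖x‖ / ‖x‖, ?_, div_mul_cancel₀ _ hx'.ne', rfl⟩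
    rw [le_div_iff₀ hx', mul_comm]
    exact hf.mul_deriv_le hd h0 hx'.le

theorem sub_mul_sub_le_inner_smul_sub_smul (a b : H) {p q m : ℝ} (hp : m ≤ p) (hq : m ≤ q) :
    (p * ‖a‖ - q * ‖b‖) * (‖a‖ - ‖b‖) - m * (‖a‖ - ‖b‖) ^ 2
      ≤ ⟪p • a - q • b, a - b⟫ - m * ‖a - b‖ ^ 2 := by
  have hexp : ⟪p • a - q • b, a - b⟫ = p * ‖a‖ ^ 2 + q * ‖b‖ ^ 2 - (p + q) * ⟪a, b⟫ := by
    simp only [inner_sub_left, inner_sub_right, real_inner_smul_left,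
      real_inner_self_eq_norm_sq, real_inner_comm a b]
    ring
  rw [hexp, norm_sub_sq_real]
  nlinarith [mul_le_mul_of_nonneg_left (real_inner_le_norm a b)
    (by linarith : (0 : ℝ) ≤ p + q - 2 * m)]

theorem ConcaveOn.mul_sq_le_inner_radialMap_sub {ψ : ℝ → ℝ} (hf : ConcaveOn ℝ (Ici 0) ψ)
    (hd : Differentiable ℝ ψ) (h0 : ψ 0 = 0) {a b : H} {m : ℝ} (hma : m ≤ deriv ψ ‖a‖)
    (hmb : m ≤ deriv ψ ‖b‖) : m * ‖a - b‖ ^ 2 ≤ ⟪radialMap ψ a - radialMap ψ b, a - b⟫ := by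
  obtain ⟨p, hp, hpa, hFa⟩ := hf.exists_radialMap_eq_smul hd h0 a
  obtain ⟨q, hq, hqb, hFb⟩ := hf.exists_radialMap_eq_smul hd h0 b
  have hred := sub_mul_sub_le_inner_smul_sub_smul a b (hma.trans hp) (hmb.trans hq)
  have hreal := hf.mul_sq_sub_le hd (norm_nonneg a) (norm_nonneg b) hma hmb
  rw [hpa, hqb] at hred
  rw [hFa, hFb]
  linarith

theorem ConcaveOn.mul_deriv_add_le_inner_radialMap_sub {ψ : ℝ → ℝ} (hf : ConcaveOn ℝ (Ici 0) ψ)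
    (hd : Differentiable ℝ ψ) (h0 : ψ 0 = 0) (a : H) {u : H} (hu : ‖u‖ = 1) {t : ℝ}
    (ht : 0 < t) : t * deriv ψ (‖a‖ + t) ≤ ⟪u, radialMap ψ a - radialMap ψ (a - t • u)⟫ := by
  have hnorm : ‖t • u‖ = t := by rw [norm_smul, hu, mul_one, Real.norm_of_nonneg ht.le]
  have hanti := hf.antitoneOn_deriv fun x _ => hd x
  have hmono := hf.mul_sq_le_inner_radialMap_sub hd h0 (a := a) (b := a - t • u)
    (m := deriv ψ (‖a‖ + t))
    (hanti (norm_nonneg a) (by simp [mem_Ici]; positivity) (by linarith))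
    (hanti (norm_nonneg _) (by simp [mem_Ici]; positivity)
      (by simpa [hnorm] using norm_sub_le a (t • u)))
  rw [sub_sub_cancel, hnorm, real_inner_smul_right, real_inner_comm] at hmono
  nlinarith

end Radial

section Expectation

variable {Ω H : Type*} [MeasurableSpace Ω] {μ : Measure Ω}
  [NormedAddCommGroup H] [InnerProductSpace ℝ H]

theorem integrable_radialMap_sub [IsFiniteMeasure μ] {X : Ω → H}
    (hX : AEStronglyMeasurable X μ) {ψ : ℝ → ℝ} (hψ : Measurable ψ)
    (hlip : LipschitzOnWith 1 ψ (Ici 0))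
    (hint : Integrable (fun ω => ψ ‖X ω‖) μ) (v : H) :
    Integrable (fun ω => radialMap ψ (X ω - v)) μ := by
  have hXv : AEStronglyMeasurable (fun ω => X ω - v) μ := hX.sub aestronglyMeasurable_const
  have hmeas : AEStronglyMeasurable (fun ω => radialMap ψ (X ω - v)) μ :=
    ((hψ.div measurable_id).comp_aemeasurable hXv.norm.aemeasurable).aestronglyMeasurable.smul hXv
  refine (hint.abs.add (integrable_const ‖v‖)).mono' hmeas (Eventually.of_forall fun ω => ?_)
  have hψlip : |ψ ‖X ω - v‖ - ψ ‖X ω‖| ≤ |‖X ω - v‖ - ‖X ω‖| := by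
    simpa [Real.dist_eq] using hlip.dist_le_mul _ (norm_nonneg (X ω - v)) _ (norm_nonneg (X ω))
  have hshift : |‖X ω - v‖ - ‖X ω‖| ≤ ‖v‖ := by
    simpa using abs_norm_sub_norm_le (X ω - v) (X ω)
  calc ‖radialMap ψ (X ω - v)‖ ≤ |ψ ‖X ω - v‖| := norm_radialMap_le ψ _
    _ ≤ |ψ ‖X ω‖| + ‖v‖ := by linarith [abs_sub_abs_le_abs_sub (ψ ‖X ω - v‖) (ψ ‖X ω‖)]

theorem integrable_deriv_comp [IsFiniteMeasure μ] {ψ : ℝ → ℝ}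
    (hψ' : ∀ x ≥ 0, |deriv ψ x| ≤ 1) {r : Ω → ℝ} (hr : AEMeasurable r μ)
    (hr0 : ∀ ω, 0 ≤ r ω) : Integrable (fun ω => deriv ψ (r ω)) μ :=
  (integrable_const (1 : ℝ)).mono'
    ((measurable_deriv ψ).comp_aemeasurable hr).aestronglyMeasurable
    (Eventually.of_forall fun ω => hψ' _ (hr0 ω))

theorem ConcaveOn.tendsto_integral_deriv_add [IsFiniteMeasure μ] {ψ : ℝ → ℝ}
    (hf : ConcaveOn ℝ (Ici 0) ψ) (hd : Differentiable ℝ ψ) (hψ' : ∀ x ≥ 0, |deriv ψ x| ≤ 1)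
    {r : Ω → ℝ}
    (hr : AEMeasurable r μ) (hr0 : ∀ ω, 0 ≤ r ω) :
    Tendsto (fun t => ∫ ω, deriv ψ (r ω + t) ∂μ) (𝓝[>] 0) (𝓝 (∫ ω, deriv ψ (r ω) ∂μ)) :=
  tendsto_integral_filter_of_dominated_convergence (fun _ => 1)
    (Eventually.of_forall fun t =>
      ((measurable_deriv ψ).comp_aemeasurable (hr.add_const t)).aestronglyMeasurable)
    (eventually_nhdsWithin_of_forall fun t (ht : 0 < t) =>
      Eventually.of_forall fun ω => hψ' _ (by linarith [hr0 ω]))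
    (integrable_const 1)
    (Eventually.of_forall fun ω =>
      (hf.subset (Ici_subset_Ici.2 (hr0 ω)) (convex_Ici _)).tendsto_deriv_add_nhdsGT hd)

theorem ConcaveOn.mul_integral_deriv_add_le_inner_integral_radialMap_sub [CompleteSpace H]
    {ψ : ℝ → ℝ} (hf : ConcaveOn ℝ (Ici 0) ψ) (hd : Differentiable ℝ ψ) (h0 : ψ 0 = 0)
    {X : Ω → H} (hF : ∀ v, Integrable (fun ω => radialMap ψ (X ω - v)) μ) (θ : H) {t : ℝ}
    (ht : 0 < t) (hdint : Integrable (fun ω => deriv ψ (‖X ω - θ‖ + t)) μ) {u : H}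
    (hu : ‖u‖ = 1) :
    t * ∫ ω, deriv ψ (‖X ω - θ‖ + t) ∂μ ≤
      ⟪u, (∫ ω, radialMap ψ (X ω - θ) ∂μ) - ∫ ω, radialMap ψ (X ω - (θ + t • u)) ∂μ⟫ := by
  have hdiff := (hF θ).sub' (hF (θ + t • u))
  rw [← integral_sub (hF θ) (hF _), ← integral_inner hdiff, ← integral_const_mul]
  refine integral_mono (hdint.const_mul t) (hdiff.const_inner u) fun ω => ?_
  simpa only [sub_add_eq_sub_sub] using
    hf.mul_deriv_add_le_inner_radialMap_sub hd h0 (X ω - θ) hu ht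

end Expectation

theorem jacobian_quadratic_form_bound_general {H : Type*} [NormedAddCommGroup H]
    [InnerProductSpace ℝ H] [CompleteSpace H]
    {Ω : Type*} [MeasurableSpace Ω] (μ : Measure Ω) [IsProbabilityMeasure μ]
    (X : Ω → H) (hXmeas : AEStronglyMeasurable X μ)
    (ψ : ℝ → ℝ) (hψdiff : Differentiable ℝ ψ) (hψ0 : ψ 0 = 0)
    (hψderiv : ∀ x ≥ (0:ℝ), 0 ≤ deriv ψ x ∧ deriv ψ x ≤ 1)
    (hconc : ConcaveOn ℝ (Set.Ici 0) ψ)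
    (hint : Integrable (fun ω => ψ ‖X ω‖) μ)
    (Z : H → H)
    (hZ : ∀ θ : H, Z θ =
      ∫ ω, (if X ω - θ = 0 then (0:H) else (ψ ‖X ω - θ‖ / ‖X ω - θ‖) • (X ω - θ)) ∂μ)
    (θ : H) (D : H →L[ℝ] H) (hD : HasFDerivAt Z D θ) :
    ∀ u : H, ‖u‖ = 1 →
      (inner ℝ u (D u) : ℝ) ≤ -∫ ω, deriv ψ ‖X ω - θ‖ ∂μ := by
  intro u hu
  have hψ' : ∀ x ≥ (0 : ℝ), |deriv ψ x| ≤ 1 := fun x hx =>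
    abs_le.2 ⟨by linarith [(hψderiv x hx).1], (hψderiv x hx).2⟩
  have hlip : LipschitzOnWith 1 ψ (Ici 0) :=
    (convex_Ici 0).lipschitzOnWith_of_nnnorm_deriv_le (fun x _ => hψdiff x) fun x hx => by
      simpa [← NNReal.coe_le_coe, Real.norm_eq_abs] using hψ' x hx
  have hF := integrable_radialMap_sub hXmeas hψdiff.continuous.measurable hlip hint
  have hZ' : ∀ v, Z v = ∫ ω, radialMap ψ (X ω - v) ∂μ := fun v => by
    simp only [hZ, radialMap_eq_ite]
  have hr : AEMeasurable (fun ω => ‖X ω - θ‖) μ :=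
    (hXmeas.sub aestronglyMeasurable_const).norm.aemeasurable
  have hbound : ∀ t > (0 : ℝ),
      t⁻¹ * (⟪u, Z (θ + t • u)⟫ - ⟪u, Z θ⟫) ≤ -∫ ω, deriv ψ (‖X ω - θ‖ + t) ∂μ := by
    intro t ht
    rw [← inner_sub_right, inv_mul_le_iff₀ ht, mul_neg, le_neg, ← inner_neg_right, neg_sub,
      hZ', hZ']
    exact hconc.mul_integral_deriv_add_le_inner_integral_radialMap_sub hψdiff hψ0 hF θ ht
      (integrable_deriv_comp hψ' (hr.add_const t) fun ω => by positivity) hu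
  exact le_of_tendsto_of_tendsto (hD.tendsto_inner_slope_nhdsGT u)
    (hconc.tendsto_integral_deriv_add hψdiff hψ' hr fun ω => norm_nonneg _).neg
    (eventually_nhdsWithin_of_forall hbound)

/-- The quadratic form of the Jacobian of Z(θ) = E[(X−θ)/‖X−θ‖·ψ(‖X−θ‖)] satisfies
uᵀ Jac(Z)(θ) u ≤ −E[ψ'(‖X − θ‖)] for every unit vector u. -/
theorem jacobian_quadratic_form_bound {H : Type*} [NormedAddCommGroup H]
    [InnerProductSpace ℝ H] [CompleteSpace H]
    {Ω : Type*} [MeasurableSpace Ω] (μ : Measure Ω) [IsProbabilityMeasure μ]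
    (X : Ω → H) (hXmeas : AEStronglyMeasurable X μ)
    (ψ : ℝ → ℝ) (hψdiff : Differentiable ℝ ψ) (hψ0 : ψ 0 = 0)
    (hψderiv : ∀ x ≥ (0:ℝ), 0 ≤ deriv ψ x ∧ deriv ψ x ≤ 1)
    (hconc : ConcaveOn ℝ (Set.Ici 0) ψ)
    (hint : Integrable (fun ω => ψ ‖X ω‖) μ)
    (Z : H → H)
    (hZ : ∀ θ : H, Z θ =
      ∫ ω, (if X ω - θ = 0 then (0:H) else (ψ ‖X ω - θ‖ / ‖X ω - θ‖) • (X ω - θ)) ∂μ)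
    (θ : H) (D : H →L[ℝ] H) (hD : HasFDerivAt Z D θ)
    (hderiv_int : Integrable (fun ω => deriv ψ ‖X ω - θ‖) μ) :
    ∀ u : H, ‖u‖ = 1 →
      (inner ℝ u (D u) : ℝ) ≤ -∫ ω, deriv ψ ‖X ω - θ‖ ∂μ :=
  jacobian_quadratic_form_bound_general μ X hXmeas ψ hψdiff hψ0 hψderiv hconc hint Z hZ θ D hD
end
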